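/- Let λ > 0 and let z ∈ ℂ^{d×d} be Hermitian and invertible with z⁻¹ > (1/λ)·a₀a₀*/(n+1) and Σ_{j=1}^n Nⱼ* z Nⱼ < λ·1. Define G(λ;z) ∈ ℂ^{s×s} as the block-diagonal matrix with diagonal blocks λ⁻¹·1_d, (λ·1 − Σ_{j=1}^n Nⱼ* z Nⱼ)⁻¹, and z. Then G(λ;z) > 0, G(λ;z)⁻¹ − A₀ > 0, and F(G(λ;z)) is the block-diagonal matrix with diagonal blocks λ·1_d, λ·1_{2nd}, and z⁻¹ + Σ_{i=1}^n Mᵢ ( λ·1 − Σ_{j=1}^n Nⱼ* z Nⱼ )⁻¹ Mᵢ*. -/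

import Mathlib

/-!
With `W = λ·1 − ∑ⱼ Nⱼ* z Nⱼ`, the matrix `z⁻¹` dominates the positive semidefinite
`a₀a₀*/(λ(n+1))`, so `z > 0` and `G = diag(λ⁻¹, W⁻¹, z)` is positive definite with
`G⁻¹ = diag(λ, W, z⁻¹)`. In `G⁻¹ − A₀` only the first and third blocks are coupled, and the Schur
complement of the block `λ·1` is `diag(W, z⁻¹ − a₀a₀*/(λ(n+1)))`, positive by hypothesis. Each
`Aᵢ* G Aᵢ` is block diagonal with blocks `0`, `Nᵢ* z Nᵢ`, `Mᵢ W⁻¹ Mᵢ*`, so in `F(G)` the middle block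
collapses to `W + ∑ᵢ Nᵢ* z Nᵢ = λ·1`.
-/

noncomputable section

open scoped ComplexOrder Matrix

/-- Assemble a 3×3 block matrix over the index type `K1 ⊕ K2 ⊕ K3`. -/
def blocks3 {K1 K2 K3 : Type}
    (X11 : Matrix K1 K1 ℂ) (X12 : Matrix K1 K2 ℂ) (X13 : Matrix K1 K3 ℂ)
    (X21 : Matrix K2 K1 ℂ) (X22 : Matrix K2 K2 ℂ) (X23 : Matrix K2 K3 ℂ)
    (X31 : Matrix K3 K1 ℂ) (X32 : Matrix K3 K2 ℂ) (X33 : Matrix K3 K3 ℂ) :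
    Matrix (K1 ⊕ K2 ⊕ K3) (K1 ⊕ K2 ⊕ K3) ℂ :=
  Matrix.of fun p q =>
    match p, q with
    | .inl i, .inl j => X11 i j
    | .inl i, .inr (.inl j) => X12 i j
    | .inl i, .inr (.inr j) => X13 i j
    | .inr (.inl i), .inl j => X21 i j
    | .inr (.inl i), .inr (.inl j) => X22 i j
    | .inr (.inl i), .inr (.inr j) => X23 i j
    | .inr (.inr i), .inl j => X31 i j
    | .inr (.inr i), .inr (.inl j) => X32 i j
    | .inr (.inr i), .inr (.inr j) => X33 i j
/-- The index type realizing the block decomposition `ℂ^s = ℂ^d ⊕ ℂ^{2nd} ⊕ ℂ^d`. -/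
abbrev S3 (n d : ℕ) : Type := Fin d ⊕ Fin (2 * n * d) ⊕ Fin d

/-- The matrix `A₀`, with `(1,3)`-block `a₀*/√(n+1)` and `(3,1)`-block `a₀/√(n+1)`. -/
def lowA0 (n : ℕ) {d : ℕ} (a₀ : Matrix (Fin d) (Fin d) ℂ) : Matrix (S3 n d) (S3 n d) ℂ :=
  blocks3 0 0 ((Real.sqrt ((n : ℝ) + 1))⁻¹ • a₀ᴴ) 0 0 0
    ((Real.sqrt ((n : ℝ) + 1))⁻¹ • a₀) 0 0

/-- The matrix `Aᵢ`, with `(2,3)`-block `Mᵢ*` and `(3,2)`-block `Nᵢ`. -/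
def lowA {n d : ℕ} (Mi Ni : Matrix (Fin d) (Fin (2 * n * d)) ℂ) :
    Matrix (S3 n d) (S3 n d) ℂ :=
  blocks3 0 0 0 0 0 Miᴴ 0 Ni 0

/-- `F(Z) = Z⁻¹ + ∑ᵢ Aᵢ* Z Aᵢ`. -/
def lowF {n d : ℕ} (M N : Fin n → Matrix (Fin d) (Fin (2 * n * d)) ℂ)
    (Z : Matrix (S3 n d) (S3 n d) ℂ) : Matrix (S3 n d) (S3 n d) ℂ :=
  Z⁻¹ + ∑ i, (lowA (M i) (N i))ᴴ * Z * lowA (M i) (N i)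

namespace Matrix.PosDef

variable {m n K : Type*} [Fintype m] [Fintype n] [DecidableEq m]
  [Field K] [PartialOrder K] [StarRing K] [StarOrderedRing K]

theorem posDef_fromBlocks₁₁ {A : Matrix m m K} (B : Matrix m n K) {D : Matrix n n K}
    (hA : A.PosDef) (hS : (D - Bᴴ * A⁻¹ * B).PosDef) : (fromBlocks A B Bᴴ D).PosDef := by
  have := hA.isUnit.invertible
  refine .of_dotProduct_mulVec_pos ((IsHermitian.fromBlocks₁₁ B D hA.1).mpr hS.1) fun v hv => ?_
  rw [dotProduct_mulVec, ← Sum.elim_comp_inl_inr v, schur_complement_eq₁₁ B D _ _ hA.1,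
    ← dotProduct_mulVec, ← dotProduct_mulVec]
  by_cases hy : v ∘ Sum.inr = 0
  · have hx : v ∘ Sum.inl ≠ 0 := fun hx => hv (funext (Sum.rec (congrFun hx) (congrFun hy)))
    simpa [hy] using hA.dotProduct_mulVec_pos hx
  · exact add_pos_of_nonneg_of_pos (hA.posSemidef.dotProduct_mulVec_nonneg _)
      (hS.dotProduct_mulVec_pos hy)

theorem fromBlocks_diag {A : Matrix m m K} {D : Matrix n n K} (hA : A.PosDef) (hD : D.PosDef) :
    (fromBlocks A 0 0 D).PosDef := by
  simpa using hA.posDef_fromBlocks₁₁ (0 : Matrix m n K) (by simpa using hD)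

end Matrix.PosDef

theorem Matrix.inv_real_smul_one {m : Type*} [Fintype m] [DecidableEq m] {r : ℝ} (hr : r ≠ 0) :
    (r • 1 : Matrix m m ℂ)⁻¹ = r⁻¹ • 1 :=
  inv_eq_left_inv (by simp [smul_smul, hr])

section Blocks3

open Matrix

variable {K1 K2 K3 : Type}

theorem blocks3_eq_fromBlocks
    (X11 : Matrix K1 K1 ℂ) (X12 : Matrix K1 K2 ℂ) (X13 : Matrix K1 K3 ℂ)
    (X21 : Matrix K2 K1 ℂ) (X22 : Matrix K2 K2 ℂ) (X23 : Matrix K2 K3 ℂ)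
    (X31 : Matrix K3 K1 ℂ) (X32 : Matrix K3 K2 ℂ) (X33 : Matrix K3 K3 ℂ) :
    blocks3 X11 X12 X13 X21 X22 X23 X31 X32 X33 =
      fromBlocks X11 (fromCols X12 X13) (fromRows X21 X31) (fromBlocks X22 X23 X32 X33) := by
  ext (i | j | k) (i' | j' | k') <;> rfl

theorem blocks3_diag_eq_fromBlocks (X : Matrix K1 K1 ℂ) (Y : Matrix K2 K2 ℂ)
    (Z : Matrix K3 K3 ℂ) :
    blocks3 X 0 0 0 Y 0 0 0 Z = fromBlocks X 0 0 (fromBlocks Y 0 0 Z) := by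
  simp [blocks3_eq_fromBlocks]

theorem blocks3_diag_add (X X' : Matrix K1 K1 ℂ) (Y Y' : Matrix K2 K2 ℂ)
    (Z Z' : Matrix K3 K3 ℂ) :
    blocks3 X 0 0 0 Y 0 0 0 Z + blocks3 X' 0 0 0 Y' 0 0 0 Z' =
      blocks3 (X + X') 0 0 0 (Y + Y') 0 0 0 (Z + Z') := by
  simp [blocks3_diag_eq_fromBlocks, fromBlocks_add]

theorem blocks3_diag_sum {ι : Type*} [Fintype ι]
    (X : ι → Matrix K1 K1 ℂ) (Y : ι → Matrix K2 K2 ℂ) (Z : ι → Matrix K3 K3 ℂ) :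
    ∑ i, blocks3 (X i) 0 0 0 (Y i) 0 0 0 (Z i) =
      blocks3 (∑ i, X i) 0 0 0 (∑ i, Y i) 0 0 0 (∑ i, Z i) := by
  ext (i | j | k) (i' | j' | k') <;> simp [blocks3, Matrix.sum_apply]

variable [Fintype K1] [Fintype K2] [Fintype K3] [DecidableEq K1] [DecidableEq K2]

theorem Matrix.PosDef.blocks3_diag {X : Matrix K1 K1 ℂ} {Y : Matrix K2 K2 ℂ}
    {Z : Matrix K3 K3 ℂ} (hX : X.PosDef) (hY : Y.PosDef) (hZ : Z.PosDef) :
    (blocks3 X 0 0 0 Y 0 0 0 Z).PosDef := by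
  rw [blocks3_diag_eq_fromBlocks]
  exact hX.fromBlocks_diag (hY.fromBlocks_diag hZ)

theorem Matrix.PosDef.blocks3_of_schur {A : Matrix K1 K1 ℂ} {W : Matrix K2 K2 ℂ}
    (B : Matrix K1 K3 ℂ) {D : Matrix K3 K3 ℂ} (hA : A.PosDef) (hW : W.PosDef)
    (hS : (D - Bᴴ * A⁻¹ * B).PosDef) : (blocks3 A 0 B 0 W 0 Bᴴ 0 D).PosDef := by
  have hB : fromRows (0 : Matrix K2 K1 ℂ) Bᴴ = (fromCols 0 B)ᴴ := by
    simp [conjTranspose_fromCols_eq_fromRows_conjTranspose]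
  rw [blocks3_eq_fromBlocks, hB]
  refine hA.posDef_fromBlocks₁₁ _ ?_
  convert hW.fromBlocks_diag hS using 1
  ext (i | i) (j | j) <;>
    simp [conjTranspose_fromCols_eq_fromRows_conjTranspose, fromRows_mul, mul_fromCols]

theorem inv_blocks3_diag [DecidableEq K3] {X : Matrix K1 K1 ℂ} {Y : Matrix K2 K2 ℂ}
    {Z : Matrix K3 K3 ℂ} (hX : IsUnit X) (hY : IsUnit Y) (hZ : IsUnit Z) :
    (blocks3 X 0 0 0 Y 0 0 0 Z)⁻¹ = blocks3 X⁻¹ 0 0 0 Y⁻¹ 0 0 0 Z⁻¹ := by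
  have hYZ : IsUnit (fromBlocks Y 0 0 Z) := isUnit_fromBlocks_zero₂₁.mpr ⟨hY, hZ⟩
  simp [blocks3_diag_eq_fromBlocks, inv_fromBlocks_zero₂₁_of_isUnit_iff, hX, hY, hZ, hYZ]

theorem conjTranspose_mul_blocks3_diag_mul (P : Matrix K2 K3 ℂ) (Q : Matrix K3 K2 ℂ)
    (X : Matrix K1 K1 ℂ) (Y : Matrix K2 K2 ℂ) (Z : Matrix K3 K3 ℂ) :
    (blocks3 0 0 0 0 0 P 0 Q 0)ᴴ * blocks3 X 0 0 0 Y 0 0 0 Z * blocks3 0 0 0 0 0 P 0 Q 0 =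
      blocks3 0 0 0 0 (Qᴴ * Z * Q) 0 0 0 (Pᴴ * Y * P) := by
  simp [blocks3_eq_fromBlocks, fromBlocks_conjTranspose, fromBlocks_multiply, Matrix.mul_assoc]

end Blocks3

theorem lowF_blocks3_diag {n d : ℕ} (M N : Fin n → Matrix (Fin d) (Fin (2 * n * d)) ℂ)
    (X : Matrix (Fin d) (Fin d) ℂ) (Y : Matrix (Fin (2 * n * d)) (Fin (2 * n * d)) ℂ)
    (Z : Matrix (Fin d) (Fin d) ℂ) :
    lowF M N (blocks3 X 0 0 0 Y 0 0 0 Z) = (blocks3 X 0 0 0 Y 0 0 0 Z)⁻¹ +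
      blocks3 0 0 0 0 (∑ i, (N i)ᴴ * Z * N i) 0 0 0 (∑ i, M i * Y * (M i)ᴴ) := by
  simp_rw [lowF, lowA, conjTranspose_mul_blocks3_diag_mul, Matrix.conjTranspose_conjTranspose,
    blocks3_diag_sum, Finset.sum_const_zero]

theorem posDef_blocks3_diag_sub_lowA0 (n : ℕ) {d : ℕ} (a₀ : Matrix (Fin d) (Fin d) ℂ)
    {lam : ℝ} (hlam : 0 < lam) 
    {W : Matrix (Fin (2 * n * d)) (Fin (2 * n * d)) ℂ} (hW : W.PosDef)
    {Z : Matrix (Fin d) (Fin d) ℂ} (hZ : (Z - (lam⁻¹ * ((n : ℝ) + 1)⁻¹) • (a₀ * a₀ᴴ)).PosDef) :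
    (blocks3 (lam • 1) 0 0 0 W 0 0 0 Z - lowA0 n a₀).PosDef := by
  set c := (√((n : ℝ) + 1))⁻¹
  have hc : c * c = ((n : ℝ) + 1)⁻¹ := by
    rw [← mul_inv, Real.mul_self_sqrt (by positivity)]
  have hdiff : blocks3 (lam • 1) 0 0 0 W 0 0 0 Z - lowA0 n a₀ =
      blocks3 (lam • 1) 0 (-(c • a₀ᴴ)) 0 W 0 (-(c • a₀ᴴ))ᴴ 0 Z := by
    ext (i | i | i) (j | j | j) <;> simp [blocks3, lowA0, c]
  rw [hdiff]
  refine .blocks3_of_schur _ (.smul .one hlam) hW ?_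
  convert hZ using 2
  simp only [Matrix.conjTranspose_neg, Matrix.conjTranspose_smul,
    Matrix.conjTranspose_conjTranspose, star_trivial, Matrix.neg_mul, Matrix.mul_neg, neg_neg,
    Matrix.smul_mul, Matrix.mul_smul, Matrix.inv_real_smul_one hlam.ne', Matrix.mul_one,
    smul_neg, smul_smul]
  rw [← hc, mul_left_comm]

theorem value_reduction_lower_general (n d : ℕ)
    (a₀ : Matrix (Fin d) (Fin d) ℂ)
    (M N : Fin n → Matrix (Fin d) (Fin (2 * n * d)) ℂ)
    (lam : ℝ) (hlam : 0 < lam)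
    (z : Matrix (Fin d) (Fin d) ℂ)
    (hza : (z⁻¹ - (lam⁻¹ * ((n : ℝ) + 1)⁻¹) • (a₀ * a₀ᴴ)).PosDef)
    (hzN : (lam • 1 - ∑ j, (N j)ᴴ * z * N j).PosDef)
    (G : Matrix (S3 n d) (S3 n d) ℂ)
    (hG : G = blocks3
      (lam⁻¹ • 1) 0 0
      0 ((lam • 1 - ∑ j, (N j)ᴴ * z * N j)⁻¹) 0
      0 0 z) :
    G.PosDef ∧
    (G⁻¹ - lowA0 n a₀).PosDef ∧
    lowF M N G = blocks3
      (lam • 1) 0 0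
      0 (lam • 1) 0
      0 0 (z⁻¹ + ∑ i, M i * (lam • 1 - ∑ j, (N j)ᴴ * z * N j)⁻¹ * (M i)ᴴ) := by
  set W := lam • 1 - ∑ j, (N j)ᴴ * z * N j
  have hz : z.PosDef := by
    refine Matrix.posDef_inv_iff.mp ?_
    simpa using hza.add_posSemidef ((Matrix.posSemidef_self_mul_conjTranspose a₀).smul
      (by positivity : (0 : ℝ) ≤ lam⁻¹ * ((n : ℝ) + 1)⁻¹))
  have hlam' : (lam⁻¹ • 1 : Matrix (Fin d) (Fin d) ℂ).PosDef := .smul .one (inv_pos.2 hlam)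
  have hGinv : G⁻¹ = blocks3 (lam • 1) 0 0 0 W 0 0 0 z⁻¹ := by
    have := hzN.isUnit.invertible
    rw [hG, inv_blocks3_diag hlam'.isUnit hzN.inv.isUnit hz.isUnit,
      Matrix.inv_real_smul_one (inv_ne_zero hlam.ne'), inv_inv, Matrix.inv_inv_of_invertible]
  refine ⟨hG ▸ .blocks3_diag hlam' hzN.inv hz, ?_, ?_⟩
  · rw [hGinv]
    exact posDef_blocks3_diag_sub_lowA0 n a₀ hlam hzN hza
  · rw [hG, lowF_blocks3_diag, ← hG, hGinv, blocks3_diag_add]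
    simp only [add_zero, W, sub_add_cancel]

/-- Lemma 4.3: the explicit block-diagonal matrix `G(λ;z)` is positive definite, satisfies
`G(λ;z)⁻¹ − A₀ > 0`, and `F(G(λ;z))` is block diagonal with diagonal blocks `λ·1_d`,
`λ·1_{2nd}` and `z⁻¹ + ∑ᵢ Mᵢ (λ·1 − ∑ⱼ Nⱼ* z Nⱼ)⁻¹ Mᵢ*`. -/
theorem value_reduction_lower (n d : ℕ)
    (a₀ : Matrix (Fin d) (Fin d) ℂ)
    (M N : Fin n → Matrix (Fin d) (Fin (2 * n * d)) ℂ)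
    (lam : ℝ) (hlam : 0 < lam)
    (z : Matrix (Fin d) (Fin d) ℂ) (hz : z.IsHermitian) (hzu : IsUnit z)
    (hza : (z⁻¹ - (lam⁻¹ * ((n : ℝ) + 1)⁻¹) • (a₀ * a₀ᴴ)).PosDef)
    (hzN : (lam • 1 - ∑ j, (N j)ᴴ * z * N j).PosDef)
    (G : Matrix (S3 n d) (S3 n d) ℂ)
    (hG : G = blocks3
      (lam⁻¹ • 1) 0 0
      0 ((lam • 1 - ∑ j, (N j)ᴴ * z * N j)⁻¹) 0
      0 0 z) :
    G.PosDef ∧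
    (G⁻¹ - lowA0 n a₀).PosDef ∧
    lowF M N G = blocks3
      (lam • 1) 0 0
      0 (lam • 1) 0
      0 0 (z⁻¹ + ∑ i, M i * (lam • 1 - ∑ j, (N j)ᴴ * z * N j)⁻¹ * (M i)ᴴ) :=
  value_reduction_lower_general n d a₀ M N lam hlam z hza hzN G hG
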